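/- arXiv:1006.0325 — 2 statements merged into one kernel-verified Lean document; each statement's English description precedes it below -/
import Mathlib

section
/- There is a matroid M on the 6-element ground set {1,…,6} whose independent sets are exactly the subsets of cardinality at most 4 that contain none of the three sets {1,2,3,4}, {1,2,5,6}, {3,4,5,6}. This matroid M has rank 4, has no coloop, its distinct circuits are not pairwise disjoint (so M is not a complete intersection), for every element v the deletion M∖v has a coloop, and the h-vector of M is (1, 2, 3, 4, 2). -/
/-- The degree of a monomial, modeled as a finitely supported exponent vector. -/
def monDeg {r : ℕ} (m : Fin r →₀ ℕ) : ℕ := m.sum fun _ e => e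

/-- A (monomial) order ideal: a finite nonempty set of monomials closed under divisibility. -/
def IsOrderIdeal {r : ℕ} (X : Finset (Fin r →₀ ℕ)) : Prop :=
  X.Nonempty ∧ ∀ m ∈ X, ∀ n : Fin r →₀ ℕ, n ≤ m → n ∈ X

/-- An order ideal is pure if all its maximal monomials (w.r.t. divisibility) have
the same degree. -/
def IsPureSet {r : ℕ} (X : Finset (Fin r →₀ ℕ)) : Prop :=
  ∀ m ∈ X, ∀ n ∈ X, (∀ p ∈ X, m ≤ p → p = m) → (∀ p ∈ X, n ≤ p → p = n) →
    monDeg m = monDeg n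

/-- The number of monomials of `X` of degree `i`. -/
def degCount {r : ℕ} (X : Finset (Fin r →₀ ℕ)) (i : ℕ) : ℕ :=
  (X.filter fun m => monDeg m = i).card

/-- `h` is the h-vector `(h_0, …, h_e)` of `X`, where `e` is the top degree of `X`. -/
def IsHVectorOf {r : ℕ} (X : Finset (Fin r →₀ ℕ)) (h : List ℕ) : Prop :=
  h ≠ [] ∧ (∀ i, degCount X i = h.getD i 0) ∧ degCount X (h.length - 1) ≠ 0

/-- A finite sequence is an O-sequence if it is the h-vector of a monomial order ideal. -/
def IsOSequence (h : List ℕ) : Prop :=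
  ∃ (r : ℕ) (X : Finset (Fin r →₀ ℕ)), IsOrderIdeal X ∧ IsHVectorOf X h

/-- A finite sequence is a pure O-sequence if it is the h-vector of a pure monomial
order ideal. -/
def IsPureOSequence (h : List ℕ) : Prop :=
  ∃ (r : ℕ) (X : Finset (Fin r →₀ ℕ)), IsOrderIdeal X ∧ IsPureSet X ∧ IsHVectorOf X h
/-- `matroidF M i` is the number `f_{i-1}` of independent sets of `M` of cardinality `i`. -/
noncomputable def matroidF {α : Type*} (M : Matroid α) (i : ℕ) : ℕ :=
  {I : Set α | M.Indep I ∧ I.ncard = i}.ncard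

/-- The `j`-th entry of the h-vector of a rank-`d` matroid `M`:
`h_j = ∑_{i=0}^{j} (-1)^{j-i} C(d-i, j-i) f_{i-1}`. -/
noncomputable def matroidH {α : Type*} (M : Matroid α) (d j : ℕ) : ℤ :=
  ∑ i ∈ Finset.range (j + 1),
    (-1 : ℤ) ^ (j - i) * ((d - i).choose (j - i)) * (matroidF M i)

/-- A loop: an element of the ground set belonging to no independent set. -/
def IsLoopElem {α : Type*} (M : Matroid α) (v : α) : Prop :=
  v ∈ M.E ∧ ¬ M.Indep {v}

/-- A coloop: an element of the ground set contained in every basis. -/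
def IsColoopElem {α : Type*} (M : Matroid α) (v : α) : Prop :=
  v ∈ M.E ∧ ∀ B, M.IsBase B → v ∈ B

/-- A circuit: a minimal dependent set. -/
def IsCircuitSet {α : Type*} (M : Matroid α) (C : Set α) : Prop :=
  C ⊆ M.E ∧ ¬ M.Indep C ∧ ∀ D, D ⊂ C → M.Indep D

/-! The three forbidden sets are the unions of two of the pairs `{0,1}`, `{2,3}`, `{4,5}`, and
they are exactly the circuits of `M`: every 5-set misses one pair element and so contains the
union of the other two pairs. Every element lies in one of these circuits, so `M` has no coloop,
and two of them share a pair. Two elements of the same pair lie in the same circuits, so after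
deleting `v` its partner lies in no circuit, i.e. is a coloop of `M ∖ v`. Counting independent
sets gives the f-vector `(1, 6, 15, 20, 12)`, hence the h-vector `(1, 2, 3, 4, 2)`. All finite
checks are decided over the subsets of `Fin 6`. -/
open Finset Matroid

theorem isColoopElem_iff_isColoop {α : Type*} {M : Matroid α} {e : α} :
    IsColoopElem M e ↔ M.IsColoop e :=
  ⟨fun h ↦ isColoop_iff_forall_mem_isBase.2 fun _ hB ↦ h.2 _ hB,
    fun h ↦ ⟨h.mem_ground, fun _ hB ↦ h.mem_of_isBase hB⟩⟩

theorem isCircuitSet_iff_isCircuit {α : Type*} {M : Matroid α} {C : Set α} :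
    IsCircuitSet M C ↔ M.IsCircuit C := by
  rw [isCircuit_iff_forall_ssubset, Dep, IsCircuitSet]
  exact ⟨fun ⟨hCE, hC, hsub⟩ ↦ ⟨⟨hC, hCE⟩, fun _ hI ↦ hsub _ hI⟩,
    fun ⟨⟨hC, hCE⟩, hsub⟩ ↦ ⟨hCE, hC, fun _ hD ↦ hsub hD⟩⟩

theorem Matroid.isColoop_restrict_sdiff_singleton {α : Type*} {M : Matroid α} {v w : α}
    (hw : w ∈ M.E) (hwv : w ≠ v) (h : ∀ C, M.IsCircuit C → w ∈ C → v ∈ C) :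
    (M ↾ (M.E \ {v})).IsColoop w := by
  rw [isColoop_iff_forall_notMem_isCircuit (by simpa [hw] using hwv)]
  intro C hC hwC
  rw [restrict_isCircuit_iff Set.sdiff_subset] at hC
  exact (hC.2 (h C hC.1 hwC)).2 rfl

theorem matroidH_eq_zero_of_lt {α : Type*} {M : Matroid α} {d j : ℕ}
    (hf : ∀ i, d < i → matroidF M i = 0) (hj : d < j) : matroidH M d j = 0 := by
  refine Finset.sum_eq_zero fun i _ ↦ ?_
  rcases le_or_gt i d with hi | hi
  · rw [Nat.choose_eq_zero_of_lt (by omega)]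
    simp
  · simp [hf i hi]

section FinsetIndep

variable {α : Type*} [Fintype α] {M : Matroid α} {P : Finset α → Prop}

theorem Matroid.isCircuit_coe_iff (hE : M.E = Set.univ)
    (hP : ∀ S : Finset α, M.Indep ↑S ↔ P S) (S : Finset α) :
    M.IsCircuit ↑S ↔ ¬ P S ∧ ∀ T ⊂ S, P T := by
  rw [isCircuit_iff_forall_ssubset, Dep, hE, hP]
  simp only [Set.subset_univ, and_true, and_congr_right_iff]
  refine fun _ ↦ ⟨fun h T hT ↦ (hP T).1 (h (by simpa)), fun h I hI ↦ ?_⟩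
  lift I to Finset α using I.toFinite
  exact (hP I).2 (h I (by simpa using hI))

theorem Matroid.isBase_coe_iff (hP : ∀ S : Finset α, M.Indep ↑S ↔ P S) (S : Finset α) :
    M.IsBase ↑S ↔ P S ∧ ∀ T, P T → S ⊆ T → T = S := by
  rw [isBase_iff_maximal_indep, Maximal, hP]
  refine and_congr_right fun _ ↦ ⟨fun h T hT hST ↦ ?_, fun h I hI hSI ↦ ?_⟩
  · exact Finset.coe_injective ((h ((hP T).2 hT) (by simpa)).antisymm (by simpa))
  · lift I to Finset α using I.toFinite
    simp [h I ((hP I).1 hI) (by simpa using hSI)]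

theorem matroidF_eq_card [DecidablePred P] (hP : ∀ S : Finset α, M.Indep ↑S ↔ P S)
    (i : ℕ) : matroidF M i = #{S | P S ∧ S.card = i} := by
  classical
  have hset : {I : Set α | M.Indep I ∧ I.ncard = i} =
      ((↑) : Finset α → Set α) '' ↑({S | P S ∧ S.card = i} : Finset (Finset α)) := by
    ext I
    lift I to Finset α using I.toFinite
    simp [hP, Finset.coe_injective.eq_iff]
  rw [matroidF, hset, Set.ncard_image_of_injective _ Finset.coe_injective, Set.ncard_coe_finset]

end FinsetIndep

def pairUnions : Finset (Finset (Fin 6)) := {{0, 1, 2, 3}, {0, 1, 4, 5}, {2, 3, 4, 5}}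

def IsPairUnionIndep (S : Finset (Fin 6)) : Prop :=
  S.card ≤ 4 ∧ ∀ C ∈ pairUnions, ¬ C ⊆ S

instance : DecidablePred IsPairUnionIndep := fun _ ↦ inferInstanceAs (Decidable (_ ∧ _))

theorem IsPairUnionIndep.empty : IsPairUnionIndep ∅ := by decide

theorem IsPairUnionIndep.subset ⦃I J : Finset (Fin 6)⦄ (hJ : IsPairUnionIndep J)
    (hIJ : I ⊆ J) : IsPairUnionIndep I :=
  ⟨(card_le_card hIJ).trans hJ.1, fun C hC hCI ↦ hJ.2 C hC (hCI.trans hIJ)⟩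

set_option maxRecDepth 100000 in
theorem IsPairUnionIndep.exists_insert ⦃I J : Finset (Fin 6)⦄ :
    IsPairUnionIndep I → IsPairUnionIndep J → I.card < J.card →
      ∃ e ∈ J, e ∉ I ∧ IsPairUnionIndep (insert e I) := by
  revert I J
  decide

noncomputable def pairUnionMatroid : Matroid (Fin 6) :=
  (IndepMatroid.ofFinset Set.univ IsPairUnionIndep IsPairUnionIndep.empty
    IsPairUnionIndep.subset IsPairUnionIndep.exists_insert
    (fun _ _ ↦ Set.subset_univ _)).matroid

namespace pairUnionMatroid

theorem ground_eq : pairUnionMatroid.E = Set.univ := rfl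

theorem indep_coe_iff (S : Finset (Fin 6)) :
    pairUnionMatroid.Indep ↑S ↔ IsPairUnionIndep S := by
  simp [pairUnionMatroid]

theorem indep_iff (I : Set (Fin 6)) :
    pairUnionMatroid.Indep I ↔ I.ncard ≤ 4 ∧
      ¬ (({0, 1, 2, 3} : Set (Fin 6)) ⊆ I) ∧
      ¬ (({0, 1, 4, 5} : Set (Fin 6)) ⊆ I) ∧
      ¬ (({2, 3, 4, 5} : Set (Fin 6)) ⊆ I) := by
  lift I to Finset (Fin 6) using I.toFinite
  simp only [indep_coe_iff, IsPairUnionIndep, pairUnions, Set.ncard_coe_finset,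
    Finset.mem_insert, Finset.mem_singleton, forall_eq_or_imp, forall_eq,
    Set.insert_subset_iff, Set.singleton_subset_iff, Finset.insert_subset_iff,
    Finset.singleton_subset_iff, Finset.mem_coe]

set_option maxRecDepth 100000 in
theorem isCircuit_iff (C : Set (Fin 6)) :
    pairUnionMatroid.IsCircuit C ↔ ∃ S ∈ pairUnions, ↑S = C := by
  lift C to Finset (Fin 6) using C.toFinite
  rw [isCircuit_coe_iff ground_eq indep_coe_iff]
  simp only [Finset.coe_inj, exists_eq_right]
  revert C
  decide

set_option maxRecDepth 100000 in
theorem matroidF_eq (i : ℕ) : matroidF pairUnionMatroid i = [1, 6, 15, 20, 12].getD i 0 := by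
  rw [matroidF_eq_card indep_coe_iff]
  rcases lt_or_ge i 5 with hi | hi
  · interval_cases i <;> decide
  · rw [List.getD_eq_default _ _ (show [1, 6, 15, 20, 12].length ≤ i by simpa using hi),
      Finset.card_eq_zero, Finset.filter_eq_empty_iff]
    exact fun S _ hS ↦ by have := hS.1.1; omega

set_option maxRecDepth 100000 in
theorem exists_isBase_ncard_eq_four : ∃ B, pairUnionMatroid.IsBase B ∧ B.ncard = 4 :=
  ⟨↑({0, 1, 2, 4} : Finset (Fin 6)), (isBase_coe_iff indep_coe_iff _).2 (by decide),
    Set.ncard_coe_finset _⟩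

theorem isCircuit_coe {S : Finset (Fin 6)} (hS : S ∈ pairUnions) :
    pairUnionMatroid.IsCircuit ↑S :=
  (isCircuit_iff _).2 ⟨S, hS, rfl⟩

theorem not_isColoop (e : Fin 6) : ¬ pairUnionMatroid.IsColoop e := by
  obtain ⟨S, hS, heS⟩ : ∃ S ∈ pairUnions, e ∈ S := by revert e; decide
  exact fun he ↦ he.notMem_isCircuit (isCircuit_coe hS) heS

theorem exists_isColoop_restrict_sdiff_singleton (v : Fin 6) :
    ∃ w, (pairUnionMatroid ↾ (pairUnionMatroid.E \ {v})).IsColoop w := by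
  obtain ⟨w, hwv, hw⟩ : ∃ w ≠ v, ∀ S ∈ pairUnions, w ∈ S → v ∈ S := by
    revert v; decide
  refine ⟨w, isColoop_restrict_sdiff_singleton (Set.mem_univ w) hwv fun C hC hwC ↦ ?_⟩
  obtain ⟨S, hS, rfl⟩ := (isCircuit_iff C).1 hC
  exact hw S hS hwC

theorem matroidH_eq (j : ℕ) :
    matroidH pairUnionMatroid 4 j = ([1, 2, 3, 4, 2].getD j 0 : ℕ) := by
  rcases le_or_gt j 4 with hj | hj
  · interval_cases j <;>
      simp [matroidH, Finset.sum_range_succ, matroidF_eq, Nat.choose_two_right]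
  · rw [matroidH_eq_zero_of_lt (fun i hi ↦ ?_) hj]
    · rw [List.getD_eq_default _ _ (show [1, 2, 3, 4, 2].length ≤ j by simp; omega)]
      rfl
    · rw [matroidF_eq,
        List.getD_eq_default _ _ (show [1, 6, 15, 20, 12].length ≤ i by simp; omega)]

end pairUnionMatroid

/-- There is a matroid `M` on a 6-element ground set whose independent sets are
exactly the subsets of cardinality at most 4 containing none of the three sets
`{1,2,3,4}`, `{1,2,5,6}`, `{3,4,5,6}`. This matroid has rank 4, has no coloop, its
distinct circuits are not pairwise disjoint (it is not a complete intersection),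
every single-element deletion has a coloop, and its h-vector is `(1,2,3,4,2)`. -/
theorem exists_special_rank_four_matroid :
    ∃ M : Matroid (Fin 6),
      M.E = Set.univ ∧
      (∀ I : Set (Fin 6), M.Indep I ↔ I.ncard ≤ 4 ∧
        ¬ (({0, 1, 2, 3} : Set (Fin 6)) ⊆ I) ∧
        ¬ (({0, 1, 4, 5} : Set (Fin 6)) ⊆ I) ∧
        ¬ (({2, 3, 4, 5} : Set (Fin 6)) ⊆ I)) ∧
      (∃ B, M.IsBase B ∧ B.ncard = 4) ∧
      (∀ e, ¬ IsColoopElem M e) ∧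
      (∃ C₁ C₂, IsCircuitSet M C₁ ∧ IsCircuitSet M C₂ ∧ C₁ ≠ C₂ ∧ ¬ Disjoint C₁ C₂) ∧
      (∀ v : Fin 6, ∃ e, IsColoopElem (M.restrict (M.E \ {v})) e) ∧
      (∀ j, matroidH M 4 j = (([1, 2, 3, 4, 2] : List ℕ).getD j 0 : ℤ)) := by
  refine ⟨pairUnionMatroid, rfl, pairUnionMatroid.indep_iff,
    pairUnionMatroid.exists_isBase_ncard_eq_four,
    fun e ↦ isColoopElem_iff_isColoop.not.2 (pairUnionMatroid.not_isColoop e),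
    ⟨↑({0, 1, 2, 3} : Finset (Fin 6)), ↑({0, 1, 4, 5} : Finset (Fin 6)),
      isCircuitSet_iff_isCircuit.2 (pairUnionMatroid.isCircuit_coe (by simp [pairUnions])),
      isCircuitSet_iff_isCircuit.2 (pairUnionMatroid.isCircuit_coe (by simp [pairUnions])),
      by rw [Ne, Finset.coe_inj]; decide, by rw [Finset.disjoint_coe]; decide⟩,
    fun v ↦ (pairUnionMatroid.exists_isColoop_restrict_sdiff_singleton v).imp
      fun _ ↦ isColoopElem_iff_isColoop.2,
    pairUnionMatroid.matroidH_eq⟩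
end

section
/- Let (1, r−1, a, b) and (1, r', c) be pure O-sequences with 1 ≤ r' ≤ r−1. Then there exists an integer a_1 ≥ a + r' such that (1, r, a_1, b+c) is a pure O-sequence. -/
/-!
Put the order ideals `X` (h-vector `(1, r-1, a, b)`) and `Y` (h-vector `(1, r', c)`) in one
polynomial ring, the `r'` variables of `Y` becoming variables of `X`, and add a new variable `t`.
Then `X ∪ Y ∪ tY` is an order ideal whose maximal monomials are those of `X` and `t` times those
of `Y`, all of degree 3. Its degree-one monomials are the `r - 1` variables of `X` and `t`; in
degree 2 it contains the `a` monomials of `X` and the `r'` monomials `t y_i`; in degree 3 it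
consists of the `b` monomials of `X` and the `c` monomials `t m` with `m ∈ Y` of degree 2.
-/

open Finsupp Function

section Degree
variable {n : ℕ}

lemma monDeg_eq_degree (m : Fin n →₀ ℕ) : monDeg m = m.degree := rfl

lemma monDeg_single_add (v : Fin n) (m : Fin n →₀ ℕ) :
    monDeg (single v 1 + m) = monDeg m + 1 := by
  simp [monDeg_eq_degree, add_comm]

lemma eq_of_le_of_monDeg_le {m m' : Fin n →₀ ℕ} (h : m ≤ m')
    (hdeg : monDeg m' ≤ monDeg m) :
    m' = m := by
  obtain ⟨d, rfl⟩ := exists_add_of_le h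
  have : d.degree = 0 := by simp only [monDeg_eq_degree, map_add] at hdeg; omega
  simp [(degree_eq_zero_iff d).1 this]

end Degree

lemma maximal_mem_finset_iff {α : Type*} [PartialOrder α] {X : Finset α} {m : α} :
    Maximal (· ∈ X) m ↔ m ∈ X ∧ ∀ p ∈ X, m ≤ p → p = m := by
  simp only [maximal_iff, eq_comm (a := m)]

section OrderIdeal
variable {n : ℕ} {X W : Finset (Fin n →₀ ℕ)}

lemma IsOrderIdeal.zero_mem (hX : IsOrderIdeal X) : 0 ∈ X := by
  obtain ⟨m, hm⟩ := hX.1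
  exact hX.2 m hm 0 zero_le

lemma IsOrderIdeal.degCount_zero (hX : IsOrderIdeal X) : degCount X 0 = 1 := by
  rw [degCount, Finset.card_eq_one]
  refine ⟨0, Finset.eq_singleton_iff_unique_mem.2 ⟨?_, fun m hm => ?_⟩⟩
  · exact Finset.mem_filter.2 ⟨hX.zero_mem, by simp [monDeg_eq_degree]⟩
  · simpa [monDeg_eq_degree, degree_eq_zero_iff] using (Finset.mem_filter.1 hm).2

lemma IsOrderIdeal.union (hX : IsOrderIdeal X) (hW : IsOrderIdeal W) : IsOrderIdeal (X ∪ W) := by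
  refine ⟨hX.1.mono Finset.subset_union_left, fun m hm n hnm => ?_⟩
  rcases Finset.mem_union.1 hm with hm | hm
  · exact Finset.mem_union_left _ (hX.2 m hm n hnm)
  · exact Finset.mem_union_right _ (hW.2 m hm n hnm)

lemma IsHVectorOf.monDeg_lt_length {h : List ℕ} (hX : IsHVectorOf X h) {m : Fin n →₀ ℕ}
    (hm : m ∈ X) : monDeg m < h.length := by
  by_contra hlen
  have hpos : 0 < degCount X (monDeg m) :=
    Finset.card_pos.2 ⟨m, Finset.mem_filter.2 ⟨hm, rfl⟩⟩
  rw [hX.2.1, List.getD_eq_default _ _ (not_lt.1 hlen)] at hpos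
  exact hpos.false

end OrderIdeal

def IsPureOfDeg {n : ℕ} (X : Finset (Fin n →₀ ℕ)) (e : ℕ) : Prop :=
  ∀ m, Maximal (· ∈ X) m → monDeg m = e

section Pure
variable {n : ℕ} {X W : Finset (Fin n →₀ ℕ)} {e : ℕ}

lemma IsPureOfDeg.isPureSet (hX : IsPureOfDeg X e) : IsPureSet X := fun m hm m' hm' hmax hmax' =>
  (hX m (maximal_mem_finset_iff.2 ⟨hm, hmax⟩)).trans
    (hX m' (maximal_mem_finset_iff.2 ⟨hm', hmax'⟩)).symm

lemma IsPureSet.isPureOfDeg (hpure : IsPureSet X) {h : List ℕ} (hX : IsHVectorOf X h) :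
    IsPureOfDeg X (h.length - 1) := by
  obtain ⟨m₀, hm₀⟩ := Finset.card_pos.1 (Nat.pos_of_ne_zero hX.2.2)
  obtain ⟨hm₀X, hm₀deg⟩ := Finset.mem_filter.1 hm₀
  have hmax₀ : ∀ p ∈ X, m₀ ≤ p → p = m₀ := fun p hp hle =>
    eq_of_le_of_monDeg_le hle (by have := hX.monDeg_lt_length hp; omega)
  intro m hm
  obtain ⟨hmX, hmax⟩ := maximal_mem_finset_iff.1 hm
  rw [hpure m hmX m₀ hm₀X hmax hmax₀, hm₀deg]

lemma IsPureOfDeg.union (hX : IsPureOfDeg X e) (hW : IsPureOfDeg W e) :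
    IsPureOfDeg (X ∪ W) e := by
  intro m hm
  rcases Finset.mem_union.1 hm.prop with hmX | hmW
  · exact hX m (hm.mono (fun _ => Finset.mem_union_left _) hmX)
  · exact hW m (hm.mono (fun _ => Finset.mem_union_right _) hmW)

end Pure

section Rename
variable {p n : ℕ} {g : Fin p → Fin n} {X : Finset (Fin p →₀ ℕ)}

noncomputable def rename (g : Fin p → Fin n) (X : Finset (Fin p →₀ ℕ)) :
    Finset (Fin n →₀ ℕ) :=
  X.image (mapDomain g)

lemma degCount_rename (hg : Injective g) (k : ℕ) : degCount (rename g X) k = degCount X k := by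
  rw [degCount, rename, Finset.filter_image,
    Finset.card_image_of_injective _ (mapDomain_injective hg)]
  simp only [monDeg_eq_degree, degree_mapDomain]
  rfl

lemma IsHVectorOf.rename (hg : Injective g) {h : List ℕ} (hX : IsHVectorOf X h) :
    IsHVectorOf (rename g X) h := by
  simpa only [IsHVectorOf, degCount_rename hg] using hX

lemma IsOrderIdeal.rename (hg : Injective g) (hX : IsOrderIdeal X) :
    IsOrderIdeal (rename g X) := by
  refine ⟨hX.1.image _, ?_⟩
  simp only [_root_.rename, Finset.mem_image, forall_exists_index, and_imp]
  rintro _ x hx rfl m hm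
  have hm_range : ↑m.support ⊆ Set.range g := fun i hi => by
    obtain ⟨j, -, rfl⟩ := Finset.mem_image.1 ((support_mono hm).trans mapDomain_support hi)
    exact ⟨j, rfl⟩
  refine ⟨comapDomain g m hg.injOn, hX.2 x hx _ ?_, mapDomain_comapDomain g hg m hm_range⟩
  rw [← mapDomain_le_mapDomain_iff_le hg, mapDomain_comapDomain g hg m hm_range]
  exact hm

lemma IsPureOfDeg.rename (hg : Injective g) {e : ℕ} (hX : IsPureOfDeg X e) :
    IsPureOfDeg (rename g X) e := by
  intro m hm
  have hmX : m ∈ (mapDomain g) '' X := by simpa [_root_.rename] using hm.prop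
  obtain ⟨x, hx, rfl⟩ := hmX
  have hmax : Maximal (· ∈ (mapDomain g) '' X) (mapDomain g x) := by
    simpa [_root_.rename] using hm
  rw [maximal_mem_image_monotone_iff hx (fun _ _ _ _ => mapDomain_le_mapDomain_iff_le hg _ _)]
    at hmax
  rw [monDeg_eq_degree, degree_mapDomain, ← monDeg_eq_degree]
  exact hX x hmax

lemma rename_apply_of_notMem_range {v : Fin n} (hv : v ∉ Set.range g) :
    ∀ m ∈ rename g X, m v = 0 := by
  simp only [_root_.rename, Finset.mem_image, forall_exists_index, and_imp]
  rintro _ x - rfl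
  exact mapDomain_of_notMem_range x v hv

end Rename

section Cone
variable {n : ℕ} (v : Fin n) {X Z : Finset (Fin n →₀ ℕ)}

noncomputable def cone (Z : Finset (Fin n →₀ ℕ)) : Finset (Fin n →₀ ℕ) :=
  Z ∪ Z.image (single v 1 + ·)

variable {v}

lemma IsOrderIdeal.cone (hZ : IsOrderIdeal Z) : IsOrderIdeal (cone v Z) := by
  refine ⟨hZ.1.mono Finset.subset_union_left, fun m hm m' hm'm => ?_⟩
  simp only [_root_.cone, Finset.mem_union, Finset.mem_image] at hm ⊢
  obtain ⟨z, hz, hzm⟩ : ∃ z ∈ Z, m ≤ single v 1 + z := by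
    rcases hm with hm | ⟨z, hz, rfl⟩
    · exact ⟨m, hm, le_add_self⟩
    · exact ⟨z, hz, le_rfl⟩
  have hquot : m' - single v 1 ∈ Z := hZ.2 z hz _ (tsub_le_iff_left.2 (hm'm.trans hzm))
  by_cases hv' : single v 1 ≤ m'
  · exact Or.inr ⟨_, hquot, add_tsub_cancel_of_le hv'⟩
  · -- truncated subtraction leaves `m'` unchanged because `m' v = 0`
    have hm'v : m' v = 0 := by
      rw [single_le_iff] at hv'
      omega
    left
    convert hquot using 1
    ext i
    by_cases hi : i = v
    · simp [hi, hm'v]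
    · simp [Ne.symm hi]

lemma IsPureOfDeg.cone {e : ℕ} (hZ : IsPureOfDeg Z e) : IsPureOfDeg (cone v Z) (e + 1) := by
  intro m hm
  have hmem : ∀ z ∈ Z, single v 1 + z ∈ _root_.cone v Z := fun z hz =>
    Finset.mem_union_right _ (Finset.mem_image_of_mem _ hz)
  rcases Finset.mem_union.1 hm.prop with hmZ | hmZ
  · have := hm.le_of_ge (hmem m hmZ) le_add_self
    simpa using congrArg (· v) (le_antisymm this le_add_self)
  obtain ⟨z, hz, rfl⟩ := Finset.mem_image.1 hmZ
  have hzmax : Maximal (· ∈ Z) z :=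
    ⟨hz, fun z' hz' hle => by
      simpa using hm.le_of_ge (hmem z' hz') (add_le_add_right hle _)⟩
  rw [monDeg_single_add, hZ z hzmax]

lemma degCount_union_image_single_add (hX : ∀ x ∈ X, x v = 0) (k : ℕ) :
    degCount (X ∪ Z.image (single v 1 + ·)) (k + 1) = degCount X (k + 1) + degCount Z k := by
  have hdisj : Disjoint (X.filter (monDeg · = k + 1))
      ((Z.image (single v 1 + ·)).filter (monDeg · = k + 1)) := by
    refine Finset.disjoint_filter_filter (Finset.disjoint_left.2 ?_)
    rintro _ hx hz
    obtain ⟨z, -, rfl⟩ := Finset.mem_image.1 hz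
    simpa using hX _ hx
  rw [degCount, Finset.filter_union, Finset.card_union_of_disjoint hdisj, Finset.filter_image,
    Finset.card_image_of_injective _ (add_right_injective _)]
  simp only [monDeg_single_add, add_left_inj]
  rfl

lemma le_degCount_union_cone (hX : ∀ x ∈ X, x v = 0) (k : ℕ) :
    degCount X (k + 1) + degCount Z k ≤ degCount (X ∪ cone v Z) (k + 1) := by
  rw [← degCount_union_image_single_add hX]
  refine Finset.card_le_card (Finset.filter_subset_filter _ ?_)
  rw [_root_.cone, ← Finset.union_assoc, Finset.union_right_comm]
  exact Finset.subset_union_left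

lemma degCount_union_cone (hX : ∀ x ∈ X, x v = 0) {k : ℕ}
    (hZX : ∀ z ∈ Z, monDeg z = k + 1 → z ∈ X) :
    degCount (X ∪ cone v Z) (k + 1) = degCount X (k + 1) + degCount Z k := by
  rw [← degCount_union_image_single_add hX, degCount, degCount, _root_.cone,
    ← Finset.union_assoc, Finset.union_right_comm, Finset.filter_union]
  congr 1
  refine Finset.union_eq_left.2 fun z hz => ?_
  obtain ⟨hzZ, hzk⟩ := Finset.mem_filter.1 hz
  exact Finset.mem_filter.2 ⟨Finset.mem_union_left _ (hZX z hzZ hzk), hzk⟩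

end Cone

section Vars
variable {p q : ℕ}

noncomputable def vars (X : Finset (Fin p →₀ ℕ)) : Finset (Fin p) :=
  Finset.univ.filter (single · 1 ∈ X)

lemma card_vars (X : Finset (Fin p →₀ ℕ)) : (vars X).card = degCount X 1 := by
  have hdeg1 : X.filter (monDeg · = 1) = (vars X).image (single · 1) := by
    ext m
    simp only [Finset.mem_filter, Finset.mem_image, vars, Finset.mem_univ, true_and]
    rw [monDeg_eq_degree]
    constructor
    · rintro ⟨hm, hdeg⟩
      obtain ⟨i, rfl⟩ : m ∈ Set.range (single · 1) := by rw [range_single_one]; exact hdeg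
      exact ⟨i, hm, rfl⟩
    · rintro ⟨i, hi, rfl⟩
      exact ⟨hi, degree_single i 1⟩
  rw [degCount, hdeg1, Finset.card_image_of_injective _ (single_left_injective one_ne_zero)]

lemma exists_injective_castAdd_of_card_le {S : Finset (Fin q)} {T : Finset (Fin p)}
    (h : S.card ≤ T.card) :
    ∃ g : Fin q → Fin (p + q),
      Injective g ∧ ∀ i ∈ S, ∃ j ∈ T, g i = Fin.castAdd q j := by
  obtain ⟨e⟩ : Nonempty (S ↪ T) := Function.Embedding.nonempty_of_card_le (by simpa using h)
  classical
  refine ⟨fun i => if hi : i ∈ S then Fin.castAdd q (e ⟨i, hi⟩) else Fin.natAdd p i,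
    fun i i' hii' => ?_, fun i hi => ⟨e ⟨i, hi⟩, (e ⟨i, hi⟩).2, by simp [hi]⟩⟩
  by_cases hi : i ∈ S <;> by_cases hi' : i' ∈ S <;>
    simp only [hi, hi', dite_true, dite_false] at hii'
  · simpa using e.injective (Subtype.ext (Fin.castAdd_injective _ _ hii'))
  · have := congrArg Fin.val hii'
    simp only [Fin.val_castAdd, Fin.val_natAdd] at this
    omega
  · have := congrArg Fin.val hii'
    simp only [Fin.val_castAdd, Fin.val_natAdd] at this
    omega
  · exact Fin.natAdd_injective _ _ hii'

end Vars

section CommonRenaming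
variable {p q : ℕ}

lemma mem_rename_of_monDeg_eq_one {n : ℕ} {f : Fin p → Fin n} {g : Fin q → Fin n}
    {X : Finset (Fin p →₀ ℕ)} {Y : Finset (Fin q →₀ ℕ)}
    (hfg : ∀ i ∈ vars Y, ∃ j ∈ vars X, g i = f j) :
    ∀ z ∈ rename g Y, monDeg z = 1 → z ∈ rename f X := by
  simp only [rename, Finset.mem_image, forall_exists_index, and_imp]
  rintro _ y hy rfl hdeg
  rw [monDeg_eq_degree, degree_mapDomain] at hdeg
  obtain ⟨i, rfl⟩ : y ∈ Set.range (single · 1) := by rw [range_single_one]; exact hdeg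
  obtain ⟨j, hj, hij⟩ := hfg i (by simpa [vars] using hy)
  exact ⟨single j 1, by simpa [vars] using hj, by simp [hij]⟩

lemma exists_common_renaming (X : Finset (Fin p →₀ ℕ)) (Y : Finset (Fin q →₀ ℕ))
    (h : degCount Y 1 ≤ degCount X 1) :
    ∃ (n : ℕ) (v : Fin n) (f : Fin p → Fin n) (g : Fin q → Fin n),
      Injective f ∧ Injective g ∧ v ∉ Set.range f ∧
      ∀ z ∈ rename g Y, monDeg z = 1 → z ∈ rename f X := by
  rw [← card_vars, ← card_vars] at h
  obtain ⟨g, hg, hgX⟩ := exists_injective_castAdd_of_card_le h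
  refine ⟨p + q + 1, Fin.last _, Fin.castSucc ∘ Fin.castAdd q, Fin.castSucc ∘ g,
    (Fin.castSucc_injective _).comp (Fin.castAdd_injective _ _),
    (Fin.castSucc_injective _).comp hg, ?_, mem_rename_of_monDeg_eq_one fun i hi => ?_⟩
  · rintro ⟨j, hj⟩
    exact Fin.castSucc_ne_last _ hj
  · obtain ⟨j, hj, hij⟩ := hgX i hi
    exact ⟨j, hj, by simp [hij]⟩

end CommonRenaming

/-- If `(1, r-1, a, b)` and `(1, r', c)` are pure O-sequences with `1 ≤ r' ≤ r-1`,
then there is an integer `a₁ ≥ a + r'` such that `(1, r, a₁, b + c)` is a pure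
O-sequence. -/
theorem exists_pure_shifted (r a b r' c : ℕ)
    (H : IsPureOSequence [1, r - 1, a, b]) (H' : IsPureOSequence [1, r', c])
    (hr'1 : 1 ≤ r') (hr' : r' ≤ r - 1) :
    ∃ a1 : ℕ, a + r' ≤ a1 ∧ IsPureOSequence [1, r, a1, b + c] := by
  obtain ⟨p, X, hXideal, hXpure, hX⟩ := H
  obtain ⟨q, Y, hYideal, hYpure, hY⟩ := H'
  obtain ⟨n, v, f, g, hf, hg, hvf, hYX⟩ :=
    exists_common_renaming X Y (by rw [hX.2.1, hY.2.1]; exact hr')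
  set X' := rename f X ∪ cone v (rename g Y)
  have hXv := rename_apply_of_notMem_range (X := X) hvf
  have hcount (k : ℕ) (hk : k ≠ 1) :
      degCount X' (k + 1) = degCount X (k + 1) + degCount Y k := by
    rw [degCount_union_cone hXv, degCount_rename hf, degCount_rename hg]
    intro z hz hzk
    rcases k with _ | _ | k
    · exact hYX z hz hzk
    · contradiction
    · have := (hY.rename hg).monDeg_lt_length hz
      simp only [List.length_cons, List.length_nil] at this
      omega
  have hXpure3 : IsPureOfDeg X 3 := by simpa using hXpure.isPureOfDeg hX
  have hYpure2 : IsPureOfDeg Y 2 := by simpa using hYpure.isPureOfDeg hY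
  have hX'pure : IsPureOfDeg X' 3 := (hXpure3.rename hf).union (hYpure2.rename hg).cone
  have hX'ideal : IsOrderIdeal X' := (hXideal.rename hf).union (hYideal.rename hg).cone
  refine ⟨degCount X' 2, ?_, n, X', hX'ideal, hX'pure.isPureSet, by simp, fun i => ?_, ?_⟩
  · simpa [degCount_rename hf, degCount_rename hg, hX.2.1, hY.2.1] using
      le_degCount_union_cone (Z := rename g Y) hXv 1
  · match i with
    | 0 => simpa using hX'ideal.degCount_zero
    | 1 =>
      rw [hcount 0 (by omega), hX.2.1, hY.2.1]
      simp only [List.getD_cons_succ, List.getD_cons_zero]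
      omega
    | 2 => simp
    | k + 3 =>
      rw [hcount (k + 2) (by omega), hX.2.1, hY.2.1]
      rcases k with _ | k <;> simp
  · have hb : b ≠ 0 := by simpa [hX.2.1] using hX.2.2
    simp [hcount 2 (by omega), hX.2.1, hY.2.1, hb]
end
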